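/- Almost-sure reachability via ranking supermartingales: Consider a discrete-time stochastic dynamical system on a compact Borel set 𝒳 ⊆ ℝ^m given by a Borel-measurable dynamics function f : ℝ^m × ℝ^n × ℝ^p → ℝ^m, a Borel-measurable control policy π : ℝ^m → ℝ^n, and a probability distribution d on ℝ^p, with f(x, π(x), w) ∈ 𝒳 whenever x ∈ 𝒳 and w lies in the support of d. Let 𝒳_t ⊆ 𝒳 be a Borel target set. On a probability space (Ω, ℱ, ℙ), let (ω_t)_{t∈ℕ} be an independent sequence of ℝ^p-valued random variables each with law d, fix x₀ ∈ 𝒳, and define (x_t)_{t∈ℕ} by x_{t+1} = f(x_t, π(x_t), ω_t). Suppose there exist a continuous function V : 𝒳 → ℝ and ε > 0 such that V(x) ≥ 0 for all x ∈ 𝒳 and ∫ V(f(x, π(x), w)) dd(w) ≤ V(x) − ε for every x ∈ 𝒳 \ 𝒳_t. Then ℙ[ ∃ t ∈ ℕ : x_t ∈ 𝒳_t ] = 1. -/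

import Mathlib

/-!
Let `B t` be the event that the chain has not visited the target by time `t`, and
`G t = 𝔼[V (x t); B t]`. Both `x t` and `B t` are determined by the noise before time `t`, of
which `ω t` is independent, so integrating out `ω t` first turns the drift condition into
`G (t + 1) ≤ G t - ε ℙ(B t) ≤ G t - ε ℙ(never visit)`. A nonnegative sequence cannot decrease by
a fixed positive amount forever, hence `ℙ(never visit) = 0`.
-/

open MeasureTheory ProbabilityTheory

/-- The (topological) support of a measure: the set of points all of whose open
neighbourhoods have positive measure. -/
def measureSupport {E : Type*} [TopologicalSpace E] [MeasurableSpace E]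
    (d : Measure E) : Set E :=
  {w | ∀ U : Set E, IsOpen U → w ∈ U → 0 < d U}

open Function

lemma measureSupport_eq_support {E : Type*} [TopologicalSpace E] [MeasurableSpace E]
    (d : Measure E) : measureSupport d = d.support := by
  ext w
  simp only [measureSupport, Measure.support_eq_forall_isOpen, Set.mem_ofPred_eq]
  exact forall_congr' fun U => forall_comm

lemma IsCompact.exists_indicator_mem_Icc {E : Type*} [TopologicalSpace E] {s : Set E}
    {V : E → ℝ} (hs : IsCompact s) (hV : ContinuousOn V s) (hV0 : ∀ x ∈ s, 0 ≤ V x) :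
    ∃ C, ∀ x, s.indicator V x ∈ Set.Icc 0 C := by
  obtain ⟨C, hC⟩ := hs.exists_bound_of_continuousOn hV
  refine ⟨max C 0, fun x => ?_⟩
  by_cases hx : x ∈ s
  · rw [Set.indicator_of_mem hx]
    exact ⟨hV0 x hx, le_max_of_le_left ((le_abs_self _).trans (hC x hx))⟩
  · rw [Set.indicator_of_notMem hx]
    exact ⟨le_rfl, le_max_right _ _⟩

lemma nonpos_of_forall_nonneg_of_le_sub {G : ℕ → ℝ} {c : ℝ} (hG : ∀ t, 0 ≤ G t)
    (hstep : ∀ t, G (t + 1) ≤ G t - c) : c ≤ 0 := by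
  by_contra! hc
  have hlin : ∀ t : ℕ, G t ≤ G 0 - t * c := by
    intro t
    induction t with
    | zero => simp
    | succ t ih => push_cast; linarith [hstep t]
  obtain ⟨t, ht⟩ := exists_nat_gt (G 0 / c)
  rw [div_lt_iff₀ hc] at ht
  linarith [hlin t, hG t]

section Freezing

variable {Ω α β E : Type*} {F mΩ : MeasurableSpace Ω} [MeasurableSpace α] [mβ : MeasurableSpace β]
  {μ : Measure Ω} [IsFiniteMeasure μ] [NormedAddCommGroup E] [NormedSpace ℝ E]

theorem ProbabilityTheory.IndepFun.integral_comp_eq_integral_integral {Y : Ω → α} {Z : Ω → β}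
    (hYZ : IndepFun Y Z μ) (hY : Measurable Y) (hZ : Measurable Z) {h : α × β → E}
    (hh : StronglyMeasurable h) (hint : Integrable (fun ϖ => h (Y ϖ, Z ϖ)) μ) :
    ∫ ϖ, h (Y ϖ, Z ϖ) ∂μ = ∫ ϖ, ∫ z, h (Y ϖ, z) ∂(μ.map Z) ∂μ := by
  have hYZm : Measurable fun ϖ => (Y ϖ, Z ϖ) := hY.prodMk hZ
  have hlaw := (indepFun_iff_map_prod_eq_prod_map_map hY.aemeasurable hZ.aemeasurable).mp hYZ
  have hint' : Integrable h ((μ.map Y).prod (μ.map Z)) := by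
    rw [← hlaw]
    exact (integrable_map_measure hh.aestronglyMeasurable hYZm.aemeasurable).mpr hint
  rw [← integral_map hYZm.aemeasurable hh.aestronglyMeasurable, hlaw, integral_prod _ hint',
    integral_map hY.aemeasurable hint'.integral_prod_left.aestronglyMeasurable]

theorem ProbabilityTheory.Indep.setIntegral_comp_eq_setIntegral_integral
    (hF : F ≤ mΩ) {Y : Ω → α} {Z : Ω → β}
    (hind : Indep F (mβ.comap Z) μ) (hY : Measurable[F] Y) (hZ : Measurable Z)
    {s : Set Ω} (hs : MeasurableSet[F] s) {h : α × β → E} (hh : StronglyMeasurable h)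
    (hint : Integrable (fun ϖ => h (Y ϖ, Z ϖ)) μ) :
    ∫ ϖ in s, h (Y ϖ, Z ϖ) ∂μ = ∫ ϖ in s, ∫ z, h (Y ϖ, z) ∂(μ.map Z) ∂μ := by
  -- Carrying the indicator of `s` along with `Y` keeps the integrand a function of a pair.
  set Y' : Ω → ℝ × α := fun ϖ => (s.indicator 1 ϖ, Y ϖ)
  have hY' : Measurable[F] Y' := (measurable_const.indicator hs).prodMk hY
  have hY'Z : IndepFun Y' Z μ :=
    (IndepFun_iff_Indep _ _ _).mpr (indep_of_indep_of_le_left hind hY'.comap_le)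
  have key := hY'Z.integral_comp_eq_integral_integral (hY'.mono hF le_rfl) hZ
    (h := fun p => p.1.1 • h (p.1.2, p.2))
    (measurable_fst.fst.stronglyMeasurable.smul (hh.comp_measurable
      (measurable_fst.snd.prodMk measurable_snd)))
    (by
      refine (hint.indicator (hF s hs)).congr (ae_of_all _ fun ϖ => ?_)
      by_cases hϖ : ϖ ∈ s <;> simp [Y', hϖ])
  simp only [Y', integral_smul] at key
  rw [← integral_indicator (hF s hs), ← integral_indicator (hF s hs)]
  convert key using 1 <;> congr 1 <;> ext ϖ <;> by_cases hϖ : ϖ ∈ s <;> simp [hϖ]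

end Freezing

section NoiseDrivenChain

variable {Ω α β : Type*} {mΩ : MeasurableSpace Ω} {μ : Measure Ω} {ω : ℕ → Ω → β}
  {g : α → β → α} {X : ℕ → Ω → α} {x₀ : α} {T : Set α}

lemma ae_mem_of_invariant {K : Set α} {S : Set β} (hX0 : ∀ ϖ, X 0 ϖ = x₀)
    (hX : ∀ t ϖ, X (t + 1) ϖ = g (X t ϖ) (ω t ϖ)) (hx₀ : x₀ ∈ K)
    (hKS : ∀ x ∈ K, ∀ w ∈ S, g x w ∈ K) (hS : ∀ t, ∀ᵐ ϖ ∂μ, ω t ϖ ∈ S) (t : ℕ) :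
    ∀ᵐ ϖ ∂μ, X t ϖ ∈ K := by
  induction t with
  | zero => exact ae_of_all _ fun ϖ => hX0 ϖ ▸ hx₀
  | succ t ih => filter_upwards [ih, hS t] with ϖ hKϖ hSϖ using hX t ϖ ▸ hKS _ hKϖ _ hSϖ

def avoidUntil (X : ℕ → Ω → α) (T : Set α) (t : ℕ) : Set Ω :=
  {ϖ | ∀ s ≤ t, X s ϖ ∉ T}

lemma avoidUntil_succ_subset (t : ℕ) : avoidUntil X T (t + 1) ⊆ avoidUntil X T t :=
  fun _ h s hs => h s (hs.trans t.le_succ)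

variable [MeasurableSpace α] [mβ : MeasurableSpace β]

abbrev noiseHistory (ω : ℕ → Ω → β) (t : ℕ) : MeasurableSpace Ω :=
  ⨆ s < t, mβ.comap (ω s)

lemma noiseHistory_le (hω : ∀ t, Measurable (ω t)) (t : ℕ) : noiseHistory ω t ≤ mΩ :=
  iSup₂_le fun s _ => (hω s).comap_le

lemma noiseHistory_mono : Monotone (noiseHistory (mβ := mβ) ω) :=
  fun _ _ hst => biSup_mono fun _ hs => lt_of_lt_of_le hs hst

lemma measurable_noiseHistory_succ (t : ℕ) : Measurable[noiseHistory ω (t + 1)] (ω t) :=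
  Measurable.of_comap_le (le_iSup₂ (f := fun s (_ : s < t + 1) => mβ.comap (ω s)) t t.lt_succ_self)

lemma ProbabilityTheory.iIndepFun.indep_noiseHistory (hind : iIndepFun ω μ)
    (hω : ∀ t, Measurable (ω t)) (t : ℕ) :
    Indep (noiseHistory ω t) (mβ.comap (ω t)) μ := by
  have := indep_iSup_of_disjoint (fun s => (hω s).comap_le) hind.iIndep
    (S := Set.Iio t) (T := {t}) (by simp)
  simpa [noiseHistory] using this

lemma measurable_noiseHistory_of_recursion (hg : Measurable (uncurry g))
    (hX0 : ∀ ϖ, X 0 ϖ = x₀) (hX : ∀ t ϖ, X (t + 1) ϖ = g (X t ϖ) (ω t ϖ)) (t : ℕ) :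
    Measurable[noiseHistory ω t] (X t) := by
  induction t with
  | zero => simp [funext hX0]
  | succ t ih =>
    rw [show X (t + 1) = fun ϖ => g (X t ϖ) (ω t ϖ) from funext (hX t)]
    exact hg.comp ((ih.mono (noiseHistory_mono t.le_succ) le_rfl).prodMk
      (measurable_noiseHistory_succ t))

lemma measurableSet_noiseHistory_avoidUntil (hT : MeasurableSet T)
    (hXm : ∀ t, Measurable[noiseHistory ω t] (X t)) (t : ℕ) :
    MeasurableSet[noiseHistory ω t] (avoidUntil X T t) := by
  have : avoidUntil X T t = ⋂ s ≤ t, X s ⁻¹' Tᶜ := by ext; simp [avoidUntil]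
  rw [this]
  exact .biInter (Set.to_countable _) fun s hs =>
    (hXm s).mono (noiseHistory_mono hs) le_rfl hT.compl

variable [IsProbabilityMeasure μ] {d : Measure β} [IsProbabilityMeasure d] {K : Set α}
  {V : α → ℝ} {C ε : ℝ}

theorem setIntegral_avoidUntil_succ_le (hg : Measurable (uncurry g))
    (hω : ∀ t, Measurable (ω t)) (hind : iIndepFun ω μ) (hlaw : ∀ t, μ.map (ω t) = d)
    (hX0 : ∀ ϖ, X 0 ϖ = x₀) (hX : ∀ t ϖ, X (t + 1) ϖ = g (X t ϖ) (ω t ϖ))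
    (hT : MeasurableSet T) (hK : ∀ t, ∀ᵐ ϖ ∂μ, X t ϖ ∈ K)
    (hV : Measurable V) (hVb : ∀ x, V x ∈ Set.Icc 0 C)
    (hdrift : ∀ x ∈ K \ T, ∫ w, V (g x w) ∂d ≤ V x - ε) (t : ℕ) :
    ∫ ϖ in avoidUntil X T (t + 1), V (X (t + 1) ϖ) ∂μ
      ≤ ∫ ϖ in avoidUntil X T t, V (X t ϖ) ∂μ - ε * μ.real (avoidUntil X T t) := by
  have hXm := measurable_noiseHistory_of_recursion hg hX0 hX
  have hB := measurableSet_noiseHistory_avoidUntil hT hXm t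
  have hBm : MeasurableSet (avoidUntil X T t) := noiseHistory_le hω t _ hB
  have hXt (s : ℕ) : Measurable (X s) := (hXm s).mono (noiseHistory_le hω s) le_rfl
  have hint {φ : Ω → ℝ} (hφ : Measurable φ) (hφb : ∀ ϖ, φ ϖ ∈ Set.Icc 0 C) : Integrable φ μ :=
    .of_mem_Icc 0 C hφ.aemeasurable (ae_of_all _ hφb)
  have hVX (s : ℕ) : Integrable (fun ϖ => V (X s ϖ)) μ := hint (hV.comp (hXt s)) fun _ => hVb _
  set PV : α → ℝ := fun x => ∫ w, V (g x w) ∂d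
  have hPV : Measurable PV := (hV.comp hg).stronglyMeasurable.integral_prod_right'.measurable
  have hPVb (x : α) : PV x ∈ Set.Icc 0 C :=
    (convex_Icc 0 C).integral_mem isClosed_Icc (ae_of_all _ fun _ => hVb _)
      (.of_mem_Icc 0 C (hV.comp (hg.comp measurable_prodMk_left)).aemeasurable
        (ae_of_all _ fun _ => hVb _))
  calc ∫ ϖ in avoidUntil X T (t + 1), V (X (t + 1) ϖ) ∂μ
      ≤ ∫ ϖ in avoidUntil X T t, V (X (t + 1) ϖ) ∂μ :=
        setIntegral_mono_set (hVX _).integrableOn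
          (ae_of_all _ fun _ => (hVb _).1) (avoidUntil_succ_subset t).eventuallyLE
    _ = ∫ ϖ in avoidUntil X T t, PV (X t ϖ) ∂μ := by
        simp_rw [hX, PV, ← hlaw t]
        exact (hind.indep_noiseHistory hω t).setIntegral_comp_eq_setIntegral_integral
          (noiseHistory_le hω t) (hXm t) (hω t) hB (hV.comp hg).stronglyMeasurable
          (hint (hV.comp (hg.comp ((hXt t).prodMk (hω t)))) fun _ => hVb _)
    _ ≤ ∫ ϖ in avoidUntil X T t, (V (X t ϖ) - ε) ∂μ := by
        refine setIntegral_mono_ae_restrict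
          (hint (hPV.comp (hXt t)) fun _ => hPVb _).integrableOn
          ((hVX t).sub (integrable_const ε)).integrableOn ?_
        filter_upwards [ae_restrict_of_ae (hK t), ae_restrict_mem hBm] with ϖ hKϖ hBϖ
        exact hdrift _ ⟨hKϖ, hBϖ t le_rfl⟩
    _ = ∫ ϖ in avoidUntil X T t, V (X t ϖ) ∂μ - ε * μ.real (avoidUntil X T t) := by
        rw [integral_sub (hVX t).integrableOn (integrable_const ε), setIntegral_const, smul_eq_mul,
          mul_comm]

theorem ae_exists_mem_of_drift (hg : Measurable (uncurry g))
    (hω : ∀ t, Measurable (ω t)) (hind : iIndepFun ω μ) (hlaw : ∀ t, μ.map (ω t) = d)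
    (hX0 : ∀ ϖ, X 0 ϖ = x₀) (hX : ∀ t ϖ, X (t + 1) ϖ = g (X t ϖ) (ω t ϖ))
    (hT : MeasurableSet T) (hK : ∀ t, ∀ᵐ ϖ ∂μ, X t ϖ ∈ K)
    (hV : Measurable V) (hVb : ∀ x, V x ∈ Set.Icc 0 C) (hε : 0 < ε)
    (hdrift : ∀ x ∈ K \ T, ∫ w, V (g x w) ∂d ≤ V x - ε) :
    ∀ᵐ ϖ ∂μ, ∃ t, X t ϖ ∈ T := by
  set N : Set Ω := {ϖ | ∀ t, X t ϖ ∉ T}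
  have hN (t : ℕ) : N ⊆ avoidUntil X T t := fun _ h s _ => h s
  have hεN : ε * μ.real N ≤ 0 :=
    nonpos_of_forall_nonneg_of_le_sub (G := fun t => ∫ ϖ in avoidUntil X T t, V (X t ϖ) ∂μ)
      (fun t => integral_nonneg fun _ => (hVb _).1) fun t =>
      (setIntegral_avoidUntil_succ_le hg hω hind hlaw hX0 hX hT hK hV hVb hdrift t).trans
        (sub_le_sub_left (mul_le_mul_of_nonneg_left (measureReal_mono (hN t)) hε.le) _)
  have hμN : μ.real N = 0 := le_antisymm (nonpos_of_mul_nonpos_right hεN hε) measureReal_nonneg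
  simpa [ae_iff, N] using (measureReal_eq_zero_iff).mp hμN

end NoiseDrivenChain

theorem ranking_supermartingale_certifies_as_reachability_general
    {m n q : ℕ}
    (𝒳 : Set (Fin m → ℝ)) (hXcpt : IsCompact 𝒳) (hXmeas : MeasurableSet 𝒳)
    (f : (Fin m → ℝ) → (Fin n → ℝ) → (Fin q → ℝ) → (Fin m → ℝ))
    (hf : Measurable fun xuw : (Fin m → ℝ) × (Fin n → ℝ) × (Fin q → ℝ) =>
      f xuw.1 xuw.2.1 xuw.2.2)
    (π : (Fin m → ℝ) → (Fin n → ℝ)) (hπ : Measurable π)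
    (d : Measure (Fin q → ℝ)) [IsProbabilityMeasure d]
    (hinv : ∀ x ∈ 𝒳, ∀ w ∈ measureSupport d, f x (π x) w ∈ 𝒳)
    (Xt : Set (Fin m → ℝ)) (hXtmeas : MeasurableSet Xt)
    {Ω : Type*} {m0 : MeasurableSpace Ω} (μ : Measure Ω) [IsProbabilityMeasure μ]
    (ω : ℕ → Ω → (Fin q → ℝ))
    (hωmeas : ∀ t, Measurable (ω t))
    (hωindep : iIndepFun ω μ)
    (hωlaw : ∀ t, μ.map (ω t) = d)
    (x₀ : Fin m → ℝ) (hx₀ : x₀ ∈ 𝒳)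
    (traj : ℕ → Ω → (Fin m → ℝ))
    (htraj0 : ∀ ϖ, traj 0 ϖ = x₀)
    (htraj : ∀ t ϖ, traj (t + 1) ϖ = f (traj t ϖ) (π (traj t ϖ)) (ω t ϖ))
    (V : (Fin m → ℝ) → ℝ) (hVcont : ContinuousOn V 𝒳)
    (hVnonneg : ∀ x ∈ 𝒳, 0 ≤ V x)
    (ε : ℝ) (hε : 0 < ε)
    (hVdec : ∀ x ∈ 𝒳 \ Xt, ∫ w, V (f x (π x) w) ∂d ≤ V x - ε) :
    μ {ϖ | ∃ t : ℕ, traj t ϖ ∈ Xt} = 1 := by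
  have hg : Measurable (uncurry fun x w => f x (π x) w) :=
    hf.comp (measurable_fst.prodMk ((hπ.comp measurable_fst).prodMk measurable_snd))
  have hsupp : ∀ᵐ w ∂d, w ∈ measureSupport d := measureSupport_eq_support d ▸ Measure.support_mem_ae
  have hstep_mem (x : Fin m → ℝ) (hx : x ∈ 𝒳) : ∀ᵐ w ∂d, f x (π x) w ∈ 𝒳 :=
    hsupp.mono fun w hw => hinv x hx w hw
  have h𝒳 := ae_mem_of_invariant htraj0 htraj hx₀ hinv
    fun t => ae_of_ae_map (hωmeas t).aemeasurable (by rw [hωlaw t]; exact hsupp)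
  -- The chain stays in `𝒳` almost surely, so replacing `V` by `0` off `𝒳` changes no integral
  -- along it and makes `V` globally measurable and bounded.
  obtain ⟨C, hVb⟩ := hXcpt.exists_indicator_mem_Icc hVcont hVnonneg
  have hV : Measurable (𝒳.indicator V) := by
    classical
    simpa [Set.piecewise_eq_indicator] using
      hVcont.measurable_piecewise continuousOn_const (g := 0) hXmeas
  have hdrift (x) (hx : x ∈ 𝒳 \ Xt) :
      ∫ w, 𝒳.indicator V (f x (π x) w) ∂d ≤ 𝒳.indicator V x - ε := by
    rw [Set.indicator_of_mem hx.1, integral_congr_ae ((hstep_mem x hx.1).mono fun w hw =>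
      Set.indicator_of_mem hw V)]
    exact hVdec x hx
  exact (measure_congr (ae_eq_univ.mpr (ae_exists_mem_of_drift hg hωmeas hωindep hωlaw htraj0
    htraj hXtmeas h𝒳 hV hVb hε hdrift))).trans measure_univ

/-- Almost-sure reachability via ranking supermartingales: a nonnegative continuous function
`V` whose one-step expected value decreases by at least `ε > 0` at every state outside the
target set `Xt` certifies that the trajectory process started at `x₀ ∈ 𝒳` reaches `Xt`
with probability `1`. -/
theorem ranking_supermartingale_certifies_as_reachability
    {m n q : ℕ}
    (𝒳 : Set (Fin m → ℝ)) (hXcpt : IsCompact 𝒳) (hXmeas : MeasurableSet 𝒳)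
    (f : (Fin m → ℝ) → (Fin n → ℝ) → (Fin q → ℝ) → (Fin m → ℝ))
    (hf : Measurable fun xuw : (Fin m → ℝ) × (Fin n → ℝ) × (Fin q → ℝ) =>
      f xuw.1 xuw.2.1 xuw.2.2)
    (π : (Fin m → ℝ) → (Fin n → ℝ)) (hπ : Measurable π)
    (d : Measure (Fin q → ℝ)) [IsProbabilityMeasure d]
    (hinv : ∀ x ∈ 𝒳, ∀ w ∈ measureSupport d, f x (π x) w ∈ 𝒳)
    (Xt : Set (Fin m → ℝ)) (hXtsub : Xt ⊆ 𝒳) (hXtmeas : MeasurableSet Xt)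
    {Ω : Type*} {m0 : MeasurableSpace Ω} (μ : Measure Ω) [IsProbabilityMeasure μ]
    (ω : ℕ → Ω → (Fin q → ℝ))
    (hωmeas : ∀ t, Measurable (ω t))
    (hωindep : iIndepFun ω μ)
    (hωlaw : ∀ t, μ.map (ω t) = d)
    (x₀ : Fin m → ℝ) (hx₀ : x₀ ∈ 𝒳)
    (traj : ℕ → Ω → (Fin m → ℝ))
    (htraj0 : ∀ ϖ, traj 0 ϖ = x₀)
    (htraj : ∀ t ϖ, traj (t + 1) ϖ = f (traj t ϖ) (π (traj t ϖ)) (ω t ϖ))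
    (V : (Fin m → ℝ) → ℝ) (hVcont : ContinuousOn V 𝒳)
    (hVnonneg : ∀ x ∈ 𝒳, 0 ≤ V x)
    (ε : ℝ) (hε : 0 < ε)
    (hVdec : ∀ x ∈ 𝒳 \ Xt, ∫ w, V (f x (π x) w) ∂d ≤ V x - ε) :
    μ {ϖ | ∃ t : ℕ, traj t ϖ ∈ Xt} = 1 :=
  ranking_supermartingale_certifies_as_reachability_general 𝒳 hXcpt hXmeas f hf π hπ d hinv Xt
    hXtmeas (m0 := m0) μ ω hωmeas hωindep hωlaw x₀ hx₀ traj htraj0 htraj V hVcont hVnonneg ε hε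
    hVdec
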